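/- Let q = 3⁵ and let K be a finite field with q² = 3¹⁰ elements with F its subfield of order q. Fix ξ ∈ K \ F and write each x ∈ K uniquely as x = x₀ + x₁ξ with x₀, x₁ ∈ F. Define f : K → K by f(x₀ + x₁ξ) = (x₀² + x₁¹⁸) + (2x₀x₁ + x₁⁵⁴)ξ (the planar function of the Penttila–Williams semifield). Then for all a, b ∈ K the number of x ∈ K with f(x+a) − b ∈ ξF equals 1 if b ∈ ξF and equals q+1 if b ∉ ξF; hence U_ξ = {(x, tξ) : x ∈ K, t ∈ F} ∪ {(∞)} is a unital in the Penttila–Williams semifield plane Π(f). -/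

import Mathlib

/-- The point set of the shift plane `Π(f)`: affine points `(x,y)`, points at
infinity `(a)` for `a ∈ K`, and the point `(∞)`. -/
abbrev ShiftPt (K : Type) : Type := (K × K) ⊕ (K ⊕ Unit)

/-- The affine line `L_{a,b} = {(x, f(x+a) − b) : x ∈ K} ∪ {(a)}` of the shift plane. -/
def affLine (K : Type) [Field K] (f : K → K) (a b : K) : Set (ShiftPt K) :=
  {P | (∃ x : K, P = Sum.inl (x, f (x + a) - b)) ∨ P = Sum.inr (Sum.inl a)}

/-- The vertical line `N_a = {(a,y) : y ∈ K} ∪ {(∞)}` of the shift plane. -/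
def vertLine (K : Type) [Field K] (a : K) : Set (ShiftPt K) :=
  {P | (∃ y : K, P = Sum.inl (a, y)) ∨ P = Sum.inr (Sum.inr ())}

/-- The line at infinity of the shift plane. -/
def lineAtInf (K : Type) : Set (ShiftPt K) :=
  {P | ∃ s : K ⊕ Unit, P = Sum.inr s}

/-- The set of all lines of the shift plane `Π(f)`. -/
def shiftLines (K : Type) [Field K] (f : K → K) : Set (Set (ShiftPt K)) :=
  {L | (∃ a b : K, L = affLine K f a b) ∨ (∃ a : K, L = vertLine K a) ∨ L = lineAtInf K}

/-- The set `θF = {tθ : t ∈ F}`, where `F = {t : t^q = t}` is the subfield of order `q`. -/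
def scalarSet (K : Type) [Field K] (q : ℕ) (θ : K) : Set K :=
  {c | ∃ t : K, t ^ q = t ∧ c = t * θ}

/-- The point set `U_θ = {(x, tθ) : x ∈ K, t ∈ F} ∪ {(∞)}`. -/
def unitalSet (K : Type) [Field K] (q : ℕ) (θ : K) : Set (ShiftPt K) :=
  {P | (∃ x t : K, t ^ q = t ∧ P = Sum.inl (x, t * θ)) ∨ P = Sum.inr (Sum.inr ())}

/-!
Write `x + a = u₀ + u₁ξ` and `b = b₀ + b₁ξ` with coordinates in `F`. The `ξ`-coordinate of
`f(x + a) - b` lies in `F` anyway, so `f(x + a) - b ∈ ξF` iff `u₀² + u₁¹⁸ = b₀`, that is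
(substituting `w = u₁⁹`, a bijection of `F`) iff `u₀² + w² = b₀`. Since `q ≡ 3 mod 4`, we have
`K = F(i)` with `i² = -1`, and `u₀² + w²` is the norm `(u₀ + wi) ^ (q + 1)` of `u₀ + wi`; the norm
`K → F` has a single point over `0` and `q + 1` points over each element of `Fˣ`. This counts the
points of `U_ξ` on the affine lines; a vertical line meets `U_ξ` in `q + 1` points and the line at
infinity only in `(∞)`.
-/

open Finset

theorem pow_pow_of_card_eq_sq {K : Type*} [Field K] [Fintype K] {q : ℕ}
    (hK : Fintype.card K = q ^ 2) (x : K) : (x ^ q) ^ q = x := by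
  rw [← pow_mul, ← sq, ← hK, FiniteField.pow_card]

section FrobeniusFixed

variable (K : Type*) [Field K] (p : ℕ) [ExpChar K p] (n : ℕ)

def frobFixed : Subfield K :=
  (iterateFrobenius K p n).eqLocusField (RingHom.id K)

variable {K p n}

theorem mem_frobFixed {t : K} : t ∈ frobFixed K p n ↔ t ^ p ^ n = t := Iff.rfl

local notation "F" => frobFixed K p n

theorem add_mul_injective {θ : K} (hθ : θ ∉ F) :
    Function.Injective fun u : F × F => (u.1 : K) + u.2 * θ := by
  rintro ⟨s, t⟩ ⟨s', t'⟩ h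
  simp only at h
  obtain rfl : t = t' := by
    by_contra hne
    have ht : (t' : K) - t ≠ 0 := sub_ne_zero.mpr (Subtype.coe_injective.ne (Ne.symm hne))
    refine hθ ?_
    have hθ_eq : θ = ((s - s' : F) : K) / ((t' - t : F) : K) := by
      push_cast
      rw [eq_div_iff ht]
      linear_combination -h
    rw [hθ_eq]
    exact Subfield.div_mem _ (s - s').2 (t' - t).2
  simpa using h

variable [Fintype K]

theorem add_mul_surjective (hK : Fintype.card K = (p ^ n) ^ 2) {θ : K} (hθ : θ ∉ F) :
    Function.Surjective fun u : F × F => (u.1 : K) + u.2 * θ := by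
  intro x
  set φ := iterateFrobenius K p n
  have hφφ : ∀ y, φ (φ y) = y := pow_pow_of_card_eq_sq hK
  have hθφ : θ - φ θ ≠ 0 := sub_ne_zero.mpr (Ne.symm hθ)
  -- solve `x = x₀ + x₁θ` together with its conjugate `x ^ q = x₀ + x₁θ ^ q`
  set t := (x - φ x) / (θ - φ θ)
  have ht : t ∈ F := by
    show φ t = t
    rw [map_div₀, map_sub, map_sub, hφφ, hφφ, ← neg_sub x, ← neg_sub θ, neg_div_neg_eq]
  have hs : x - t * θ ∈ F := by
    have ht' : φ t = t := ht
    have ht_mul : t * (θ - φ θ) = x - φ x := div_mul_cancel₀ _ hθφ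
    show φ (x - t * θ) = x - t * θ
    rw [map_sub, map_mul, ht']
    linear_combination ht_mul
  exact ⟨(⟨x - t * θ, hs⟩, ⟨t, ht⟩), by simp⟩

noncomputable def decompEquiv (hK : Fintype.card K = (p ^ n) ^ 2) {θ : K} (hθ : θ ∉ F) :
    F × F ≃ K :=
  Equiv.ofBijective _ ⟨add_mul_injective hθ, add_mul_surjective hK hθ⟩

theorem decompEquiv_apply (hK : Fintype.card K = (p ^ n) ^ 2) {θ : K} (hθ : θ ∉ F)
    (u : F × F) : decompEquiv hK hθ u = u.1 + u.2 * θ := rfl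

theorem card_frobFixed (hK : Fintype.card K = (p ^ n) ^ 2) {θ : K} (hθ : θ ∉ F) :
    Nat.card F = p ^ n := by
  have h := Nat.card_congr (decompEquiv hK hθ)
  rw [Nat.card_prod, Nat.card_eq_fintype_card (α := K), hK, ← sq] at h
  exact Nat.pow_left_injective two_ne_zero h

end FrobeniusFixed

theorem add_mul_mem_scalarSet_iff {K : Type} [Field K] {p : ℕ} [ExpChar K p] {n : ℕ} {θ : K}
    (hθ : θ ∉ frobFixed K p n) (u : frobFixed K p n × frobFixed K p n) :
    (u.1 : K) + u.2 * θ ∈ scalarSet K (p ^ n) θ ↔ u.1 = 0 := by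
  constructor
  · rintro ⟨t, ht, h⟩
    have h0 : ((0 : frobFixed K p n) : K) + (⟨t, ht⟩ : frobFixed K p n) * θ = t * θ := by simp
    exact congrArg Prod.fst (add_mul_injective hθ (h.trans h0.symm) : u = (0, ⟨t, ht⟩))
  · intro h
    exact ⟨u.2, u.2.2, by simp [h]⟩

theorem Finset.card_filter_pow_eq_le {R : Type*} [CommRing R] [IsDomain R] [DecidableEq R]
    (s : Finset R) {m : ℕ} (hm : 0 < m) (c : R) : #{z ∈ s | z ^ m = c} ≤ m := by
  calc #{z ∈ s | z ^ m = c}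
      ≤ #(Polynomial.nthRoots m c).toFinset :=
        card_le_card fun z hz => by
          simpa [Polynomial.mem_nthRoots hm] using (mem_filter.mp hz).2
    _ ≤ Multiset.card (Polynomial.nthRoots m c) := Multiset.toFinset_card_le _
    _ ≤ m := Polynomial.card_nthRoots m c

theorem Finset.card_fiber_eq_of_card_eq_mul {α β : Type*} [DecidableEq β] {s : Finset α}
    {t : Finset β} {g : α → β} {m : ℕ} (hg : ∀ a ∈ s, g a ∈ t)
    (hle : ∀ b ∈ t, #{a ∈ s | g a = b} ≤ m) (hs : #s = #t * m) {b : β} (hb : b ∈ t) :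
    #{a ∈ s | g a = b} = m := by
  refine (sum_eq_sum_iff_of_le hle).1 ?_ b hb
  rw [← card_eq_sum_card_fiberwise hg, hs, sum_const, smul_eq_mul]

theorem card_pow_succ_eq_zero {M : Type*} [MonoidWithZero M] [NoZeroDivisors M] (m : ℕ) :
    Nat.card {z : M // z ^ (m + 1) = 0} = 1 := by
  simp [pow_eq_zero_iff]

section Norm

variable {K : Type*} [Field K] [Fintype K] {p : ℕ} [ExpChar K p] {n : ℕ}

local notation "F" => frobFixed K p n

theorem pow_succ_mem_frobFixed (hK : Fintype.card K = (p ^ n) ^ 2) (z : K) :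
    z ^ (p ^ n + 1) ∈ F := by
  rw [mem_frobFixed, pow_succ, mul_pow, pow_pow_of_card_eq_sq hK, mul_comm]

/-- The norm `z ↦ z ^ (q + 1)` maps `Kˣ` (of order `(q - 1)(q + 1)`) into `Fˣ` (of order `q - 1`)
with fibres of size at most `q + 1`, so all its fibres have exactly `q + 1` elements. -/
theorem card_pow_succ_eq (hK : Fintype.card K = (p ^ n) ^ 2) (hF : Nat.card F = p ^ n)
    {c : F} (hc : c ≠ 0) : Nat.card {z : K // z ^ (p ^ n + 1) = c} = p ^ n + 1 := by
  classical
  set q := p ^ n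
  have hFin : #{x : K | x ∈ F} = q := by
    rw [← Fintype.card_subtype, ← Nat.card_eq_fintype_card, hF]
  have hc' : (c : K) ≠ 0 := by exact_mod_cast hc
  have hcard : #(univ.erase (0 : K)) = #(({x : K | x ∈ F} : Finset K).erase 0) * (q + 1) := by
    rw [card_erase_of_mem (mem_univ _), card_univ, hK, card_erase_of_mem (by simp), hFin]
    simpa [mul_comm] using Nat.sq_sub_sq q 1
  have hfiber := card_fiber_eq_of_card_eq_mul (g := fun z : K => z ^ (q + 1)) (m := q + 1)
    (fun z hz => mem_erase.mpr ⟨pow_ne_zero _ (ne_of_mem_erase hz),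
      by simpa using pow_succ_mem_frobFixed hK z⟩)
    (fun b _ => card_filter_pow_eq_le _ q.succ_pos b) hcard (b := (c : K)) (by simp [hc'])
  refine Eq.trans ?_ hfiber
  rw [Nat.card_eq_fintype_card, Fintype.card_subtype, filter_erase, erase_eq_of_notMem]
  simpa using hc'.symm

end Norm

theorem exists_sq_eq_neg_one_pow_eq_neg {K : Type*} [Field K] [Fintype K] {q : ℕ}
    (hK : Fintype.card K = q ^ 2) (hq : q % 4 = 3) : ∃ i : K, i ^ 2 = -1 ∧ i ^ q = -i := by
  obtain ⟨i, hi⟩ : IsSquare (-1 : K) := by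
    rw [FiniteField.isSquare_neg_one_iff, hK, Nat.pow_mod, hq]
    norm_num
  obtain ⟨k, hk⟩ : ∃ k, q = 2 * (2 * k + 1) + 1 := ⟨q / 4, by omega⟩
  have hi2 : i ^ 2 = -1 := by rw [sq, hi]
  refine ⟨i, hi2, ?_⟩
  rw [hk, pow_succ, pow_mul, hi2, Odd.neg_one_pow ⟨k, rfl⟩, neg_one_mul]

section SumOfTwoSquares

variable {K : Type*} [Field K] {p : ℕ} [ExpChar K p] {n : ℕ}

local notation "F" => frobFixed K p n

theorem add_mul_pow_succ {i : K} (hi2 : i ^ 2 = -1) (hiq : i ^ p ^ n = -i) (u w : F) :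
    ((u : K) + w * i) ^ (p ^ n + 1) = ((u ^ 2 + w ^ 2 : F) : K) := by
  rw [pow_succ, add_pow_expChar_pow, mul_pow, mem_frobFixed.1 u.2, mem_frobFixed.1 w.2, hiq]
  push_cast
  linear_combination (-(w : K) ^ 2) * hi2

variable [Fintype K]

theorem notMem_frobFixed_of_pow_eq_neg (hK : Fintype.card K = (p ^ n) ^ 2)
    (hq : p ^ n % 4 = 3) {i : K} (hi2 : i ^ 2 = -1) (hiq : i ^ p ^ n = -i) : i ∉ F := by
  intro hi
  have h2 : (2 : K) ≠ 0 := by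
    refine Ring.two_ne_zero fun h => ?_
    rw [FiniteField.even_card_iff_char_two, hK, Nat.pow_mod] at h
    have : p ^ n % 2 = 1 := by omega
    simp [this] at h
  have hi0 : i ≠ 0 := by
    rintro rfl
    simp at hi2
  exact mul_ne_zero h2 hi0 (by linear_combination hiq - mem_frobFixed.1 hi)

theorem card_sq_add_sq_eq_card_pow_succ (hK : Fintype.card K = (p ^ n) ^ 2) {i : K}
    (hi2 : i ^ 2 = -1) (hiq : i ^ p ^ n = -i) (hi : i ∉ F) (c : F) :
    Nat.card {w : F × F // w.1 ^ 2 + w.2 ^ 2 = c} = Nat.card {z : K // z ^ (p ^ n + 1) = c} :=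
  Nat.card_congr <| (decompEquiv hK hi).subtypeEquiv fun w => by
    rw [decompEquiv_apply, add_mul_pow_succ hi2 hiq, SetLike.coe_eq_coe]

theorem card_sq_add_sq_eq_zero (hK : Fintype.card K = (p ^ n) ^ 2) (hq : p ^ n % 4 = 3) :
    Nat.card {w : F × F // w.1 ^ 2 + w.2 ^ 2 = 0} = 1 := by
  obtain ⟨i, hi2, hiq⟩ := exists_sq_eq_neg_one_pow_eq_neg hK hq
  rw [card_sq_add_sq_eq_card_pow_succ hK hi2 hiq (notMem_frobFixed_of_pow_eq_neg hK hq hi2 hiq),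
    ZeroMemClass.coe_zero, card_pow_succ_eq_zero]

theorem card_sq_add_sq_eq_of_ne_zero (hK : Fintype.card K = (p ^ n) ^ 2) (hq : p ^ n % 4 = 3)
    {c : F} (hc : c ≠ 0) : Nat.card {w : F × F // w.1 ^ 2 + w.2 ^ 2 = c} = p ^ n + 1 := by
  obtain ⟨i, hi2, hiq⟩ := exists_sq_eq_neg_one_pow_eq_neg hK hq
  have hi := notMem_frobFixed_of_pow_eq_neg hK hq hi2 hiq
  rw [card_sq_add_sq_eq_card_pow_succ hK hi2 hiq hi, card_pow_succ_eq hK (card_frobFixed hK hi) hc]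

end SumOfTwoSquares

theorem ncard_sub_mem_scalarSet_eq {K : Type} [Field K] [Fintype K] {p : ℕ} [ExpChar K p]
    {n : ℕ} (hK : Fintype.card K = (p ^ n) ^ 2) {θ : K} (hθ : θ ∉ frobFixed K p n) {f : K → K}
    (g : frobFixed K p n × frobFixed K p n → frobFixed K p n × frobFixed K p n)
    (hf : ∀ u, f (decompEquiv hK hθ u) = decompEquiv hK hθ (g u)) (a : K)
    (β : frobFixed K p n × frobFixed K p n) :
    {x : K | f (x + a) - decompEquiv hK hθ β ∈ scalarSet K (p ^ n) θ}.ncard =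
      Nat.card {u : frobFixed K p n × frobFixed K p n // (g u).1 = β.1} := by
  rw [← Nat.card_coe_set_eq]
  refine (Nat.card_congr (((decompEquiv hK hθ).trans (Equiv.subRight a)).subtypeEquiv
    fun u => ?_)).symm
  have hsub : decompEquiv hK hθ (g u) - decompEquiv hK hθ β = decompEquiv hK hθ (g u - β) := by
    simp only [decompEquiv_apply, Prod.fst_sub, Prod.snd_sub, Subfield.coe_sub]
    ring
  rw [Equiv.trans_apply, Equiv.subRight_apply, Set.mem_ofPred_eq, sub_add_cancel, hf, hsub,
    decompEquiv_apply, add_mul_mem_scalarSet_iff hθ, Prod.fst_sub, sub_eq_zero]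

section PenttilaWilliams

variable {K : Type} [Field K] [Fintype K] [ExpChar K 3]

local notation "F" => frobFixed K 3 5

theorem card_sq_add_pow_eighteen_eq (c : F) :
    Nat.card {u : F × F // u.1 ^ 2 + u.2 ^ 18 = c} =
      Nat.card {w : F × F // w.1 ^ 2 + w.2 ^ 2 = c} :=
  Nat.card_congr <| ((Equiv.refl F).prodCongr (iterateFrobeniusEquiv F 3 2).toEquiv).subtypeEquiv
    fun u => by simp [iterateFrobenius_def, ← pow_mul]

theorem ncard_penttilaWilliams (hK : Fintype.card K = (3 ^ 5) ^ 2) {ξ : K} (hξ : ξ ∉ F)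
    {f : K → K} (hf : ∀ x0 x1 : K, x0 ^ 3 ^ 5 = x0 → x1 ^ 3 ^ 5 = x1 →
      f (x0 + x1 * ξ) = (x0 ^ 2 + x1 ^ 18) + (2 * x0 * x1 + x1 ^ 54) * ξ) (a b : K) :
    (b ∈ scalarSet K (3 ^ 5) ξ → {x : K | f (x + a) - b ∈ scalarSet K (3 ^ 5) ξ}.ncard = 1) ∧
      (b ∉ scalarSet K (3 ^ 5) ξ →
        {x : K | f (x + a) - b ∈ scalarSet K (3 ^ 5) ξ}.ncard = 3 ^ 5 + 1) := by
  have hq : 3 ^ 5 % 4 = 3 := by norm_num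
  have hf' : ∀ u : F × F, f (decompEquiv hK hξ u) =
      decompEquiv hK hξ (u.1 ^ 2 + u.2 ^ 18, 2 * u.1 * u.2 + u.2 ^ 54) := fun u => by
    rw [decompEquiv_apply, decompEquiv_apply,
      hf _ _ (mem_frobFixed.1 u.1.2) (mem_frobFixed.1 u.2.2)]
    push_cast
    rfl
  obtain ⟨β, rfl⟩ := (decompEquiv hK hξ).surjective b
  rw [ncard_sub_mem_scalarSet_eq hK hξ _ hf' a β, card_sq_add_pow_eighteen_eq,
    decompEquiv_apply, add_mul_mem_scalarSet_iff hξ]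
  exact ⟨fun h => h ▸ card_sq_add_sq_eq_zero hK hq, card_sq_add_sq_eq_of_ne_zero hK hq⟩

end PenttilaWilliams

section ShiftPlane

variable {K : Type} [Field K] {q : ℕ} {θ : K}

theorem affLine_inter_unitalSet (f : K → K) (a b : K) :
    affLine K f a b ∩ unitalSet K q θ =
      (fun x => Sum.inl (x, f (x + a) - b)) '' {x | f (x + a) - b ∈ scalarSet K q θ} := by
  ext P
  simp only [affLine, unitalSet, scalarSet, Set.mem_inter_iff, Set.mem_ofPred_eq, Set.mem_image]
  aesop

theorem vertLine_inter_unitalSet (a : K) :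
    vertLine K a ∩ unitalSet K q θ =
      insert (Sum.inr (Sum.inr ())) ((fun t => Sum.inl (a, t * θ)) '' {t | t ^ q = t}) := by
  ext P
  simp only [vertLine, unitalSet, Set.mem_inter_iff, Set.mem_ofPred_eq, Set.mem_insert_iff,
    Set.mem_image]
  aesop

theorem lineAtInf_inter_unitalSet :
    lineAtInf K ∩ unitalSet K q θ = {Sum.inr (Sum.inr ())} := by
  ext P
  simp only [lineAtInf, unitalSet, Set.mem_inter_iff, Set.mem_ofPred_eq, Set.mem_singleton_iff]
  aesop

theorem ncard_inter_unitalSet_eq_one_or [Finite K] (hθ : θ ≠ 0) {f : K → K}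
    (hF : {t : K | t ^ q = t}.ncard = q)
    (hcount : ∀ a b : K,
      (b ∈ scalarSet K q θ → {x | f (x + a) - b ∈ scalarSet K q θ}.ncard = 1) ∧
      (b ∉ scalarSet K q θ → {x | f (x + a) - b ∈ scalarSet K q θ}.ncard = q + 1))
    (L : Set (ShiftPt K)) (hL : L ∈ shiftLines K f) :
    (L ∩ unitalSet K q θ).ncard = 1 ∨ (L ∩ unitalSet K q θ).ncard = q + 1 := by
  rcases hL with ⟨a, b, rfl⟩ | ⟨a, rfl⟩ | rfl
  · rw [affLine_inter_unitalSet,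
      Set.ncard_image_of_injective _ fun x y h => (Prod.mk.inj (Sum.inl_injective h)).1]
    by_cases hb : b ∈ scalarSet K q θ
    exacts [.inl ((hcount a b).1 hb), .inr ((hcount a b).2 hb)]
  · right
    rw [vertLine_inter_unitalSet, Set.ncard_insert_of_notMem (by simp),
      Set.ncard_image_of_injective _ fun s t h =>
        mul_right_cancel₀ hθ (Prod.mk.inj (Sum.inl_injective h)).2, hF]
  · left
    rw [lineAtInf_inter_unitalSet, Set.ncard_singleton]

end ShiftPlane

/-- Theorem 2.5 (d).  Let `q = 3⁵`, `ξ ∈ K \ F`, and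
`f(x₀ + x₁ξ) = (x₀² + x₁¹⁸) + (2x₀x₁ + x₁⁵⁴)ξ` (the planar function of the
Penttila–Williams semifield).  Then for all `a b` the number of `x` with
`f(x+a) − b ∈ ξF` is `1` if `b ∈ ξF` and `q+1` otherwise; hence `U_ξ` is a
unital in `Π(f)`. -/
theorem stmt8 (q : ℕ) (hq : q = 3 ^ 5)
    (K : Type) [Field K] [Fintype K] (hcard : Fintype.card K = q ^ 2)
    (ξ : K) (hξ : ξ ^ q ≠ ξ)
    (f : K → K)
    (hf : ∀ x0 x1 : K, x0 ^ q = x0 → x1 ^ q = x1 →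
      f (x0 + x1 * ξ) = (x0 ^ 2 + x1 ^ 18) + (2 * x0 * x1 + x1 ^ 54) * ξ) :
    (∀ a b : K,
      (b ∈ scalarSet K q ξ → {x : K | f (x + a) - b ∈ scalarSet K q ξ}.ncard = 1) ∧
      (b ∉ scalarSet K q ξ → {x : K | f (x + a) - b ∈ scalarSet K q ξ}.ncard = q + 1)) ∧
    (∀ L ∈ shiftLines K f,
      (L ∩ unitalSet K q ξ).ncard = 1 ∨ (L ∩ unitalSet K q ξ).ncard = q + 1) := by
  subst hq
  have : CharP K 3 := charP_of_card_eq_prime_pow (hcard.trans (pow_mul 3 5 2).symm)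
  have hξF : ξ ∉ frobFixed K 3 5 := mem_frobFixed.not.2 hξ
  have hcount := ncard_penttilaWilliams hcard hξF hf
  exact ⟨hcount, ncard_inter_unitalSet_eq_one_or (by rintro rfl; exact hξF (zero_mem _))
    (card_frobFixed hcard hξF) hcount⟩
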